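/- arXiv:1208.1532 — 2 statements merged into one kernel-verified Lean document; each statement's English description precedes it below -/
import Mathlib

section
/- In any deque state reachable during a sorting attempt, if some element i on the deque lies between two elements j and k on the deque with j > i and k > i (a sandwich state), then no continuation of the run can successfully sort the permutation. -/
/-- State of a deque switchyard: output so far, the deque, remaining input. -/
structure DState where
  output : List ℕ
  deque : List ℕ
  input : List ℕ

/-- One step of deque sorting: push the next input element to either end of the
deque, or pop either end element of the deque to the output. -/
inductive DequeStep : DState → DState → Prop
  | pushLeft (o d i : List ℕ) (x : ℕ) : DequeStep ⟨o, d, x :: i⟩ ⟨o, x :: d, i⟩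
  | pushRight (o d i : List ℕ) (x : ℕ) : DequeStep ⟨o, d, x :: i⟩ ⟨o, d ++ [x], i⟩
  | popLeft (o d i : List ℕ) (x : ℕ) : DequeStep ⟨o, x :: d, i⟩ ⟨o ++ [x], d, i⟩
  | popRight (o d i : List ℕ) (x : ℕ) : DequeStep ⟨o, d ++ [x], i⟩ ⟨o ++ [x], d, i⟩

/-- A permutation (as a list) is deque-sortable if some run outputs `1, 2, …, n`. -/
def DequeSortable (l : List ℕ) : Prop :=
  Relation.ReflTransGen DequeStep ⟨[], [], l⟩ ⟨List.range' 1 l.length, [], []⟩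

/-- A deque list is a sandwich if some element lies between two larger elements. -/
def Sandwich (d : List ℕ) : Prop :=
  ∃ (u v w t : List ℕ) (j i k : ℕ),
    d = u ++ j :: v ++ i :: w ++ k :: t ∧ i < j ∧ i < k

/-
Once some `i` sits on the deque strictly between larger `j` and `k`, it cannot leave the deque
before one of `j`, `k` has been output, since only end elements can be popped. So a state is
doomed if its deque contains a sandwich, or its output contains an element larger than one still
on the deque, or its output is already unsorted; every step preserves this, and the final
sorted state with empty deque is not doomed.
-/

open List

theorem List.Sublist.exists_eq_append_cons {α : Type*} {a : α} {l d : List α}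
    (h : a :: l <+ d) : ∃ u r, d = u ++ a :: r ∧ l <+ r := by
  obtain ⟨r₁, r₂, rfl, ha, hl⟩ := List.cons_sublist_iff.1 h
  obtain ⟨s, t, rfl⟩ := List.append_of_mem ha
  exact ⟨s, t ++ r₂, by simp, hl.trans (List.sublist_append_right t r₂)⟩

theorem sandwich_iff_sublist {d : List ℕ} :
    Sandwich d ↔ ∃ j i k, [j, i, k] <+ d ∧ i < j ∧ i < k := by
  constructor
  · rintro ⟨u, v, w, t, j, i, k, rfl, hij, hik⟩
    exact ⟨j, i, k, by simp, hij, hik⟩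
  · rintro ⟨j, i, k, hjik, hij, hik⟩
    obtain ⟨u, r, rfl, hik'⟩ := hjik.exists_eq_append_cons
    obtain ⟨v, r', rfl, hk⟩ := hik'.exists_eq_append_cons
    obtain ⟨w, t, rfl, -⟩ := hk.exists_eq_append_cons
    exact ⟨u, v, w, t, j, i, k, by simp, hij, hik⟩

namespace Sandwich

variable {d d' : List ℕ}

theorem mono (h : d <+ d') (hs : Sandwich d) : Sandwich d' := by
  obtain ⟨j, i, k, hsub, hij, hik⟩ := sandwich_iff_sublist.1 hs
  exact sandwich_iff_sublist.2 ⟨j, i, k, hsub.trans h, hij, hik⟩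

theorem reverse (hs : Sandwich d) : Sandwich d.reverse := by
  obtain ⟨j, i, k, hsub, hij, hik⟩ := sandwich_iff_sublist.1 hs
  exact sandwich_iff_sublist.2 ⟨k, i, j, by simpa using hsub.reverse, hik, hij⟩

theorem of_cons {x : ℕ} (hs : Sandwich (x :: d)) : Sandwich d ∨ ∃ i ∈ d, i < x := by
  obtain ⟨j, i, k, hsub, hij, hik⟩ := sandwich_iff_sublist.1 hs
  rcases List.sublist_cons_iff.1 hsub with hsub | ⟨r, hr, hsub⟩
  · exact Or.inl (sandwich_iff_sublist.2 ⟨j, i, k, hsub, hij, hik⟩)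
  · obtain ⟨rfl, rfl⟩ := List.cons.inj hr
    exact Or.inr ⟨i, hsub.subset (by simp), hij⟩

theorem of_concat {x : ℕ} (hs : Sandwich (d ++ [x])) : Sandwich d ∨ ∃ i ∈ d, i < x := by
  have hrev : Sandwich (x :: d.reverse) := by simpa using hs.reverse
  rcases hrev.of_cons with h | ⟨i, hi, hix⟩
  · exact Or.inl (by simpa using h.reverse)
  · exact Or.inr ⟨i, List.mem_reverse.1 hi, hix⟩

end Sandwich

def Doomed (s : DState) : Prop :=
  Sandwich s.deque ∨ (∃ j ∈ s.output, ∃ i ∈ s.deque, i < j) ∨ ¬ s.output.Pairwise (· ≤ ·)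

namespace Doomed

theorem of_deque_sublist {o d d' i i' : List ℕ} (hd : d <+ d') (h : Doomed ⟨o, d, i⟩) :
    Doomed ⟨o, d', i'⟩ := by
  rcases h with hs | ⟨j, hj, a, ha, hlt⟩ | hunsorted
  · exact Or.inl (hs.mono hd)
  · exact Or.inr (Or.inl ⟨j, hj, a, hd.subset ha, hlt⟩)
  · exact Or.inr (Or.inr hunsorted)

theorem pop {o d D i : List ℕ} {x : ℕ} (hD : D ⊆ x :: d)
    (hsandwich : Sandwich D → Sandwich d ∨ ∃ a ∈ d, a < x) (h : Doomed ⟨o, D, i⟩) :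
    Doomed ⟨o ++ [x], d, i⟩ := by
  have unsorted_of_lt {j : ℕ} (hj : j ∈ o) (hxj : x < j) : ¬ (o ++ [x]).Pairwise (· ≤ ·) :=
    fun hp => (List.pairwise_append.1 hp).2.2 j hj x (List.mem_singleton_self x) |>.not_gt hxj
  rcases h with hs | ⟨j, hj, a, ha, hlt⟩ | hunsorted
  · rcases hsandwich hs with hs | ⟨a, ha, hlt⟩
    · exact Or.inl hs
    · exact Or.inr (Or.inl ⟨x, by simp, a, ha, hlt⟩)
  · rcases List.mem_cons.1 (hD ha) with rfl | ha
    · exact Or.inr (Or.inr (unsorted_of_lt hj hlt))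
    · exact Or.inr (Or.inl ⟨j, List.mem_append_left _ hj, a, ha, hlt⟩)
  · exact Or.inr (Or.inr fun hp => hunsorted (hp.sublist (List.sublist_append_left _ _)))

theorem step {s t : DState} (hst : DequeStep s t) (h : Doomed s) : Doomed t := by
  cases hst with
  | pushLeft o d i x => exact h.of_deque_sublist (List.sublist_cons_self x d)
  | pushRight o d i x => exact h.of_deque_sublist (List.sublist_append_left d [x])
  | popLeft o d i x => exact h.pop (List.Subset.refl _) Sandwich.of_cons
  | popRight o d i x => exact h.pop (by simp [List.subset_def, or_comm]) Sandwich.of_concat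

theorem of_reflTransGen {s t : DState} (hst : Relation.ReflTransGen DequeStep s t)
    (h : Doomed s) : Doomed t := by
  induction hst with
  | refl => exact h
  | tail _ hstep ih => exact ih.step hstep

theorem not_sorted_final (n : ℕ) : ¬ Doomed ⟨List.range' 1 n, [], []⟩ := by
  rintro (⟨u, v, w, t, j, i, k, hd, -⟩ | ⟨j, -, i, hi, -⟩ | hunsorted)
  · simp at hd
  · simp at hi
  · exact hunsorted ((List.pairwise_lt_range' (s := 1) (n := n)).imp le_of_lt)

end Doomed

/-- From a sandwich state, no continuation of the run can end with the sorted
output `1, …, n` (and empty deque and input). -/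
theorem sandwich_not_sortable (s : DState) (n : ℕ) (hs : Sandwich s.deque) :
    ¬ Relation.ReflTransGen DequeStep s ⟨List.range' 1 n, [], []⟩ := fun hrun =>
  Doomed.not_sorted_final n (Doomed.of_reflTransGen hrun (Or.inl hs))
end

section
/- There exist two deque-sortable permutations π and σ of length 7 agreeing on their first three entries such that no single placement strategy for the first three elements allows both to be sorted: specifically, for π = 7526431 and σ = 7524163, any deque state reached after pushing 7, 5, 2 (up to left-right reflection the deque is either 2,5,7 or 5,7,2) permits a successful completion for exactly one of π, σ but not the other. -/
/-- A push-only step: the next input element is moved to either end of the deque. -/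
inductive PushStep : DState → DState → Prop
  | pushLeft (o d i : List ℕ) (x : ℕ) : PushStep ⟨o, d, x :: i⟩ ⟨o, x :: d, i⟩
  | pushRight (o d i : List ℕ) (x : ℕ) : PushStep ⟨o, d, x :: i⟩ ⟨o, d ++ [x], i⟩

/-- From deque `d` with remaining input `rest`, one can complete a successful sort
of a permutation of `{1,…,7}`. -/
def CanComplete (d rest : List ℕ) : Prop :=
  Relation.ReflTransGen DequeStep ⟨[], d, rest⟩ ⟨List.range' 1 7, [], []⟩

/-!
Deque sorting from a given state is a finite search: every move lowers `2 * |input| + |deque|` by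
one, and since the output only grows, a run reaches the sorted output only through states whose
output is a prefix of it. This pruned search decides both sortability and completability; pushing
`7, 5, 2` yields only the four deques `257, 572, 275, 752`, and on each of them exactly one of the
remainders `6431`, `4163` can be completed.
-/

instance : DecidableEq DState := fun s t =>
  decidable_of_iff (s.output = t.output ∧ s.deque = t.deque ∧ s.input = t.input)
    (by cases s; cases t; simp)

namespace DState

def weight (s : DState) : ℕ := 2 * s.input.length + s.deque.length

def next (s : DState) : List DState :=
  (match s.input with
    | [] => []
    | x :: i => [⟨s.output, x :: s.deque, i⟩, ⟨s.output, s.deque ++ [x], i⟩]) ++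
  (match s.deque with
    | [] => []
    | x :: d => [⟨s.output ++ [x], d, s.input⟩]) ++
  (match s.deque.getLast? with
    | none => []
    | some x => [⟨s.output ++ [x], s.deque.dropLast, s.input⟩])

theorem mem_next_iff {s t : DState} : t ∈ s.next ↔ DequeStep s t := by
  refine ⟨fun h => ?_, fun h => ?_⟩
  · obtain ⟨o, d, i⟩ := s
    simp only [next, List.mem_append] at h
    rcases h with (hpush | hpopLeft) | hpopRight
    · match i, hpush with
      | x :: i, hpush =>
        simp only [List.mem_cons, List.not_mem_nil, or_false] at hpush
        rcases hpush with rfl | rfl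
        exacts [.pushLeft o d i x, .pushRight o d i x]
    · match d, hpopLeft with
      | x :: d, hpopLeft =>
        rw [List.mem_singleton.mp hpopLeft]
        exact .popLeft o d i x
    · match hlast : d.getLast?, hpopRight with
      | some x, hpopRight =>
        obtain ⟨d, rfl⟩ := List.getLast?_eq_some_iff.mp hlast
        rw [List.mem_singleton.mp hpopRight, List.dropLast_concat]
        exact .popRight o d i x
  · cases h <;> simp [next]

end DState

theorem DequeStep.weight_eq {s t : DState} (h : DequeStep s t) : s.weight = t.weight + 1 := by
  cases h <;> simp [DState.weight] <;> omega

theorem DequeStep.output_prefix {s t : DState} (h : DequeStep s t) : s.output <+: t.output := by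
  cases h <;> simp

theorem Relation.ReflTransGen.weight_le_of_dequeStep {s t : DState}
    (h : Relation.ReflTransGen DequeStep s t) : t.weight ≤ s.weight := by
  induction h with
  | refl => rfl
  | tail _ hstep ih => have := hstep.weight_eq; omega

theorem Relation.ReflTransGen.output_prefix_of_dequeStep {s t : DState}
    (h : Relation.ReflTransGen DequeStep s t) : s.output <+: t.output := by
  induction h with
  | refl => exact List.prefix_refl _
  | tail _ hstep ih => exact ih.trans hstep.output_prefix

namespace DState

def canReach (g : DState) : ℕ → DState → Bool
  | 0, s => decide (s = g)
  | n + 1, s => s.next.any fun t => t.output.isPrefixOf g.output && canReach g n t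

theorem canReach_iff {g : DState} {n : ℕ} {s : DState} (hw : s.weight = n + g.weight) :
    canReach g n s = true ↔ Relation.ReflTransGen DequeStep s g := by
  induction n generalizing s with
  | zero =>
    refine ⟨fun h => by rw [of_decide_eq_true h], fun h => ?_⟩
    rcases h.cases_head with rfl | ⟨t, hst, htg⟩
    · simp [canReach]
    · have := hst.weight_eq
      have := htg.weight_le_of_dequeStep
      omega
  | succ n ih =>
    simp only [canReach, List.any_eq_true, Bool.and_eq_true, List.isPrefixOf_iff_prefix,
      mem_next_iff]
    constructor
    · rintro ⟨t, hst, -, htg⟩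
      exact .head hst ((ih (by have := hst.weight_eq; omega)).mp htg)
    · intro h
      rcases h.cases_head with rfl | ⟨t, hst, htg⟩
      · omega
      · exact ⟨t, hst, htg.output_prefix_of_dequeStep,
          (ih (by have := hst.weight_eq; omega)).mpr htg⟩

end DState

theorem dequeSortable_iff (l : List ℕ) :
    DequeSortable l ↔
      DState.canReach ⟨List.range' 1 l.length, [], []⟩ (2 * l.length) ⟨[], [], l⟩ = true :=
  (DState.canReach_iff (by simp [DState.weight])).symm

theorem canComplete_iff (d rest : List ℕ) :
    CanComplete d rest ↔
      DState.canReach ⟨List.range' 1 7, [], []⟩ (2 * rest.length + d.length) ⟨[], d, rest⟩ =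
        true :=
  (DState.canReach_iff (by simp [DState.weight])).symm

theorem reflTransGen_pushStep_nil_iff {o d : List ℕ} {t : DState} :
    Relation.ReflTransGen PushStep ⟨o, d, []⟩ t ↔ t = ⟨o, d, []⟩ := by
  refine ⟨fun h => ?_, fun h => h ▸ .refl⟩
  rcases h.cases_head with rfl | ⟨u, hstep, -⟩
  · rfl
  · cases hstep

theorem reflTransGen_pushStep_cons_iff {o d i : List ℕ} {x : ℕ} {t : DState} :
    Relation.ReflTransGen PushStep ⟨o, d, x :: i⟩ t ↔
      t = ⟨o, d, x :: i⟩ ∨ Relation.ReflTransGen PushStep ⟨o, x :: d, i⟩ t ∨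
        Relation.ReflTransGen PushStep ⟨o, d ++ [x], i⟩ t := by
  refine ⟨fun h => ?_, ?_⟩
  · rcases h.cases_head with rfl | ⟨u, hstep, hut⟩
    · exact .inl rfl
    · cases hstep
      exacts [.inr (.inl hut), .inr (.inr hut)]
  · rintro (rfl | h | h)
    exacts [.refl, .head (PushStep.pushLeft o d i x) h, .head (PushStep.pushRight o d i x) h]

/-- The permutations π = 7526431 and σ = 7524163 are both deque-sortable and agree on
their first three entries, yet every deque state reachable by pushing 7, 5, 2 permits a
successful completion for exactly one of π, σ: no online placement of the first three
elements allows both to be sorted. -/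
theorem online_deque_sorting_fails :
    DequeSortable [7, 5, 2, 6, 4, 3, 1] ∧
    DequeSortable [7, 5, 2, 4, 1, 6, 3] ∧
    ∀ d : List ℕ,
      Relation.ReflTransGen PushStep ⟨[], [], [7, 5, 2]⟩ ⟨[], d, []⟩ →
      Xor' (CanComplete d [6, 4, 3, 1]) (CanComplete d [4, 1, 6, 3]) := by
  refine ⟨(dequeSortable_iff _).mpr (by decide), (dequeSortable_iff _).mpr (by decide), ?_⟩
  intro d hpush
  obtain rfl | rfl | rfl | rfl : d = [2, 5, 7] ∨ d = [5, 7, 2] ∨ d = [2, 7, 5] ∨ d = [7, 5, 2] := by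
    simpa [reflTransGen_pushStep_cons_iff, reflTransGen_pushStep_nil_iff, or_assoc] using hpush
  all_goals rw [Xor', canComplete_iff, canComplete_iff]; decide
end
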